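/- There exists a finitely generated hopfian semigroup S containing a subsemigroup T such that S \ T has exactly one element and T is not hopfian. -/
import Mathlib


/-- A semigroup is *hopfian* if every surjective semigroup endomorphism is injective. -/
def IsHopfian (S : Type*) [Semigroup S] : Prop :=
  ∀ f : S →ₙ* S, Function.Surjective f → Function.Injective f

namespace HopfEx

/-- Bicyclic monoid multiplication on ℕ × ℕ. -/
def bm (p q : ℕ × ℕ) : ℕ × ℕ := (p.1 + (q.1 - p.2), q.2 + (p.2 - q.1))

lemma bm_assoc (p q r : ℕ × ℕ) : bm (bm p q) r = bm p (bm q r) := by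
  rcases p with ⟨a, b⟩; rcases q with ⟨c, d⟩; rcases r with ⟨e, f⟩
  simp only [bm, Prod.mk.injEq]
  omega

@[simp] lemma bm_zero_left (p : ℕ × ℕ) : bm (0, 0) p = p := by
  rcases p with ⟨a, b⟩; simp [bm]

@[simp] lemma bm_zero_left' (p : ℕ × ℕ) : bm 0 p = p := bm_zero_left p

def gen (x : Bool) : ℕ × ℕ := if x then (0, 1) else (1, 0)

def pw : List Bool → ℕ × ℕ
  | [] => (0, 0)
  | x :: l => bm (gen x) (pw l)

lemma pw_append (u v : List Bool) : pw (u ++ v) = bm (pw u) (pw v) := by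
  induction u with
  | nil => simp [pw]
  | cons x l ih => simp [pw, ih, bm_assoc]

inductive Sg : Type
  | word (u : List Bool)
  | pt (p : ℕ × ℕ)
  | z
deriving DecidableEq

namespace Sg

def mul : Sg → Sg → Sg
  | word u, word v => word (u ++ v)
  | pt p, word v => pt (bm p (pw v))
  | z, word v => pt (pw v)
  | _, pt p => pt p
  | _, z => pt (0, 0)

instance : Mul Sg := ⟨mul⟩

@[simp] lemma mul_ww (u v : List Bool) : word u * word v = word (u ++ v) := rfl
@[simp] lemma mul_pw (p : ℕ × ℕ) (v : List Bool) : pt p * word v = pt (bm p (pw v)) := rfl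
@[simp] lemma mul_zw (v : List Bool) : z * word v = pt (pw v) := rfl
@[simp] lemma mul_wp (u : List Bool) (p : ℕ × ℕ) : word u * pt p = pt p := rfl
@[simp] lemma mul_pp (p q : ℕ × ℕ) : pt p * pt q = pt q := rfl
@[simp] lemma mul_zp (p : ℕ × ℕ) : z * pt p = pt p := rfl
@[simp] lemma mul_wz (u : List Bool) : word u * z = pt (0, 0) := rfl
@[simp] lemma mul_pz (p : ℕ × ℕ) : pt p * z = pt (0, 0) := rfl
@[simp] lemma mul_zz : z * z = pt (0, 0) := rfl

instance : Semigroup Sg where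
  mul_assoc a b c := by
    cases a <;> cases b <;> cases c <;>
      simp [pw_append, bm_assoc]

lemma mul_ne_z (a b : Sg) : a * b ≠ z := by
  cases a <;> cases b <;> simp [(· * ·)] <;> exact fun h => Sg.noConfusion h

end Sg

lemma pw_rep_false (a : ℕ) : pw (List.replicate a false) = (a, 0) := by
  induction a with
  | zero => simp [pw]
  | succ n ih =>
      simp only [List.replicate_succ, pw, ih, gen, if_neg (by simp : ¬ (false = true))]
      simp [bm]
      omega

lemma pw_rep_true (b : ℕ) : pw (List.replicate b true) = (0, b) := by
  induction b with
  | zero => simp [pw]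
  | succ n ih =>
      simp only [List.replicate_succ, pw, ih, gen, if_pos rfl]
      simp [bm]

lemma gen_pt (a b : ℕ) :
    Sg.pt (0, 0) * Sg.word (List.replicate a false ++ List.replicate b true) = Sg.pt (a, b) := by
  rw [Sg.mul_pw, pw_append, pw_rep_false, pw_rep_true]
  simp [bm]

/-- The subsemigroup `T = S \ {z}`. -/
def T : Subsemigroup Sg where
  carrier := {x | x ≠ Sg.z}
  mul_mem' := by
    intro a b _ _
    exact Sg.mul_ne_z a b

lemma mem_T {x : Sg} : x ∈ T ↔ x ≠ Sg.z := Iff.rfl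

/-- Inversion for products that are words. -/
lemma mul_eq_word {a b : Sg} {w : List Bool} (h : a * b = Sg.word w) :
    ∃ p q, a = Sg.word p ∧ b = Sg.word q ∧ p ++ q = w := by
  cases a <;> cases b <;> simp_all

/-- Every non-`z` element is a product. -/
lemma decomp {x : Sg} (hx : x ≠ Sg.z) : ∃ a b : Sg, x = a * b := by
  cases x with
  | word u => exact ⟨Sg.word u, Sg.word [], by simp⟩
  | pt p => exact ⟨Sg.word [], Sg.pt p, by simp⟩
  | z => exact absurd rfl hx

section Hopf

variable (f : Sg →ₙ* Sg)

lemma fne (x : Sg) (hx : x ≠ Sg.z) : f x ≠ Sg.z := by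
  obtain ⟨a, b, rfl⟩ := decomp hx
  rw [map_mul]
  exact Sg.mul_ne_z _ _

lemma fz (hf : Function.Surjective f) : f Sg.z = Sg.z := by
  obtain ⟨s, hs⟩ := hf Sg.z
  by_cases h : s = Sg.z
  · rwa [h] at hs
  · exact absurd hs (fne f s h)

lemma f_word_of (hf : Function.Surjective f) (t : Bool) :
    ∃ u : List Bool, f (Sg.word u) = Sg.word [t] := by
  obtain ⟨s, hs⟩ := hf (Sg.word [t])
  cases s with
  | word u => exact ⟨u, hs⟩
  | pt p =>
      exfalso
      have hidem : f (Sg.pt p) * f (Sg.pt p) = f (Sg.pt p) := by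
        rw [← map_mul]; simp
      rw [hs] at hidem
      simp at hidem
  | z =>
      exfalso
      rw [fz f hf] at hs
      exact Sg.noConfusion hs

lemma f_one (hf : Function.Surjective f) : f (Sg.word []) = Sg.word [] := by
  obtain ⟨u, hu⟩ := f_word_of f hf true
  have h1 : f (Sg.word []) * f (Sg.word u) = f (Sg.word u) := by
    rw [← map_mul]; simp
  rw [hu] at h1
  -- f (word []) * word [true] = word [true]
  rcases h : f (Sg.word []) with v | p | _
  · rw [h] at h1
    simp at h1
    simp [h1]
  · rw [h] at h1
    simp at h1
  · exact absurd h (fne f _ (by simp))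

lemma f_base (hf : Function.Surjective f) : f (Sg.pt (0, 0)) = Sg.pt (0, 0) := by
  have key : Sg.z * Sg.word [] = Sg.pt (0, 0) := by simp [pw]
  have := map_mul f Sg.z (Sg.word [])
  rw [key, fz f hf, f_one f hf] at this
  rw [this]
  simp [pw]

/-- If `f (word u)` is the single letter `[t]`, then one of the letter generators
maps to it. -/
lemma letter_trace (u : List Bool) (t : Bool)
    (h : f (Sg.word u) = Sg.word [t]) :
    f (Sg.word [true]) = Sg.word [t] ∨ f (Sg.word [false]) = Sg.word [t] := by
  induction u with
  | nil =>
      exfalso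
      have h0 : f (Sg.word []) * f (Sg.word []) = f (Sg.word []) := by
        rw [← map_mul]; simp
      rw [h] at h0
      simp at h0
  | cons x l ih =>
      have hsplit : Sg.word (x :: l) = Sg.word [x] * Sg.word l := by simp
      rw [hsplit, map_mul] at h
      obtain ⟨p, q, hp, hq, hpq⟩ := mul_eq_word h
      rcases List.append_eq_cons_iff.mp hpq with ⟨h1, h2⟩ | ⟨as, h1, h2⟩
      · -- p = [], q = [t]
        subst h1
        rw [h2] at hq
        exact ih hq
      · -- p = t :: as, as ++ q = []
        rcases List.append_eq_nil_iff.mp h2.symm with ⟨rfl, rfl⟩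
        rw [h1] at hp
        cases x with
        | true => exact Or.inl hp
        | false => exact Or.inr hp

lemma f_id (hf : Function.Surjective f) : ∀ x : Sg, f x = x := by
  -- letters
  obtain ⟨u, hu⟩ := f_word_of f hf true
  obtain ⟨v, hv⟩ := f_word_of f hf false
  have hc := letter_trace f u true hu
  have hd := letter_trace f v false hv
  have hletters : f (Sg.word [true]) = Sg.word [true] ∧
      f (Sg.word [false]) = Sg.word [false] := by
    rcases hc with hc | hc <;> rcases hd with hd | hd
    · exact absurd (hc.symm.trans hd) (by simp)
    · exact ⟨hc, hd⟩
    · -- swap case: contradiction with the bicyclic relation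
      exfalso
      have e1 : Sg.pt (0, 0) * Sg.word [true, false] = Sg.pt (0, 0) := by
        simp [pw, gen, bm]
      have e2 : Sg.word [true, false] = Sg.word [true] * Sg.word [false] := by simp
      have := map_mul f (Sg.pt (0, 0)) (Sg.word [true, false])
      rw [e1, f_base f hf] at this
      rw [e2, map_mul, hc, hd] at this
      -- this : pt (0,0) = pt (0,0) * (word [false] * word [true])
      simp [pw, gen, bm] at this
    · exact absurd (hc.symm.trans hd) (by simp)
  have fw : ∀ u : List Bool, f (Sg.word u) = Sg.word u := by
    intro u
    induction u with
    | nil => exact f_one f hf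
    | cons x l ih =>
        have hsplit : Sg.word (x :: l) = Sg.word [x] * Sg.word l := by simp
        rw [hsplit, map_mul, ih]
        cases x with
        | true => rw [hletters.1]
        | false => rw [hletters.2]
  intro x
  cases x with
  | word u => exact fw u
  | pt p =>
      rcases p with ⟨a, b⟩
      have := map_mul f (Sg.pt (0, 0))
        (Sg.word (List.replicate a false ++ List.replicate b true))
      rw [gen_pt, f_base f hf, fw] at this
      rw [this, gen_pt]
  | z => exact fz f hf

end Hopf

/-- The shift map witnessing non-hopficity of `T`. -/
def sh : Sg → Sg
  | Sg.word u => Sg.word u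
  | Sg.pt p => Sg.pt (bm (0, 1) p)
  | Sg.z => Sg.z

lemma sh_ne_z {x : Sg} (hx : x ≠ Sg.z) : sh x ≠ Sg.z := by
  cases x <;> simp [sh] at hx ⊢

lemma sh_mul {x y : Sg} (hx : x ≠ Sg.z) (hy : y ≠ Sg.z) :
    sh (x * y) = sh x * sh y := by
  cases x with
  | word u =>
      cases y with
      | word v => simp [sh]
      | pt p => simp [sh]
      | z => exact absurd rfl hy
  | pt p =>
      cases y with
      | word v => simp [sh, bm_assoc]
      | pt q => simp [sh]
      | z => exact absurd rfl hy
  | z => exact absurd rfl hx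

def g : ↥T →ₙ* ↥T where
  toFun x := ⟨sh x.1, sh_ne_z x.2⟩
  map_mul' x y := by
    apply Subtype.ext
    simp only [MulMemClass.coe_mul]
    exact sh_mul x.2 y.2

lemma g_surj : Function.Surjective g := by
  rintro ⟨y, hy⟩
  cases y with
  | word u =>
      exact ⟨⟨Sg.word u, by simp [mem_T]⟩, Subtype.ext (by simp [g, sh])⟩
  | pt p =>
      rcases p with ⟨a, b⟩
      refine ⟨⟨Sg.pt (a + 1, b), by simp [mem_T]⟩, Subtype.ext ?_⟩
      simp only [g, sh, MulHom.coe_mk]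
      congr 1
      simp [bm]
  | z => exact absurd rfl hy

lemma g_not_inj : ¬ Function.Injective g := by
  intro h
  have h1 : g ⟨Sg.pt (0, 0), by simp [mem_T]⟩ = g ⟨Sg.pt (1, 1), by simp [mem_T]⟩ := by
    apply Subtype.ext
    simp [g, sh, bm]
  have := h h1
  simp at this

end HopfEx


/-- There exists a finitely generated hopfian semigroup `S` containing a subsemigroup
`T` such that `S \ T` has exactly one element and `T` is not hopfian. -/
theorem stmt_14 : ∃ (S : Type) (_ : Semigroup S) (T : Subsemigroup S),
    (∃ A : Finset S, Subsemigroup.closure (A : Set S) = ⊤) ∧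
    IsHopfian S ∧ (∃ x : S, (T : Set S)ᶜ = {x}) ∧ ¬ IsHopfian T := by
  refine ⟨HopfEx.Sg, inferInstance, HopfEx.T, ⟨?_, ?_, ?_, ?_⟩⟩
  · -- finitely generated
    refine ⟨{HopfEx.Sg.z, HopfEx.Sg.word [], HopfEx.Sg.word [true],
      HopfEx.Sg.word [false], HopfEx.Sg.pt (0, 0)}, ?_⟩
    rw [eq_top_iff]
    rintro x -
    have hword : ∀ u : List Bool, HopfEx.Sg.word u ∈
        Subsemigroup.closure ({HopfEx.Sg.z, HopfEx.Sg.word [], HopfEx.Sg.word [true],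
          HopfEx.Sg.word [false], HopfEx.Sg.pt (0, 0)} : Finset HopfEx.Sg) := by
      intro u
      induction u with
      | nil => exact Subsemigroup.subset_closure (by simp)
      | cons a l ih =>
          have : HopfEx.Sg.word (a :: l) = HopfEx.Sg.word [a] * HopfEx.Sg.word l := by simp
          rw [this]
          refine mul_mem (Subsemigroup.subset_closure ?_) ih
          cases a <;> simp
    cases x with
    | word u => exact hword u
    | pt p =>
        rcases p with ⟨a, b⟩
        rw [← HopfEx.gen_pt a b]
        exact mul_mem (Subsemigroup.subset_closure (by simp)) (hword _)
    | z => exact Subsemigroup.subset_closure (by simp)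
  · -- S is hopfian
    intro f hf x y hxy
    rwa [HopfEx.f_id f hf x, HopfEx.f_id f hf y] at hxy
  · -- complement of T is {z}
    refine ⟨HopfEx.Sg.z, ?_⟩
    ext x
    simp [HopfEx.T]
  · -- T is not hopfian
    intro h
    exact HopfEx.g_not_inj (h HopfEx.g HopfEx.g_surj)
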